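/- Let (H,R,χ) be a finite-dimensional pre-Cartier quasitriangular bialgebra. Then the dual bialgebra H* with R° : H*⊗H* → k, R°(p⊗q) = (p⊗q)(R), and χ° : H*⊗H* → k, χ°(p⊗q) = (p⊗q)(χ), is a pre-Cartier coquasitriangular bialgebra: χ° satisfies (u χ°)∗m = m∗(u χ°), χ°(Id⊗m) = χ°₁₂ + (R°)⁻¹₁₂∗χ°₁₃∗R°₁₂ and χ°(m⊗Id) = χ°₂₃ + (R°)⁻¹₂₃∗χ°₁₃∗R°₂₃. If (H,R,χ) is Cartier then R°∗χ° = (χ°)ᵒᵖ∗R°. -/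

import Mathlib

/-!
Every identity is the evaluation of an axiom of `(H, R, χ)` against `p ⊗ q` or `p ⊗ q ⊗ r`.
Convolution in `H*` is the transpose of `Δ`, so pairing `χ` with `p ⊗ (q ∗ r)` (resp.
`(p ∗ q) ⊗ r`) is pairing `(Id ⊗ Δ) χ` (resp. `(Δ ⊗ Id) χ`) with `p ⊗ q ⊗ r`, and a leg
embedding that puts `1` in a slot turns into the factor `r 1` (resp. `p 1`), i.e. the counit of
`H*`. The hexagon-type axioms for `χ` then give the two coproduct identities, while
`Δ`-invariance of `χ` and the Cartier condition transfer verbatim.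
-/

open scoped TensorProduct

noncomputable section

variable (k H : Type*) [CommRing k] [Ring H] [Bialgebra k H]

/-- leg embedding `a ⊗ b ↦ a ⊗ b ⊗ 1` into `H ⊗ (H ⊗ H)`. -/
def leg12 : H ⊗[k] H →ₐ[k] H ⊗[k] (H ⊗[k] H) :=
  Algebra.TensorProduct.map (AlgHom.id k H) Algebra.TensorProduct.includeLeft

/-- leg embedding `a ⊗ b ↦ 1 ⊗ a ⊗ b`. -/
def leg23 : H ⊗[k] H →ₐ[k] H ⊗[k] (H ⊗[k] H) :=
  Algebra.TensorProduct.includeRight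

/-- leg embedding `a ⊗ b ↦ a ⊗ 1 ⊗ b`. -/
def leg13 : H ⊗[k] H →ₐ[k] H ⊗[k] (H ⊗[k] H) :=
  Algebra.TensorProduct.map (AlgHom.id k H) Algebra.TensorProduct.includeRight

/-- `(Id ⊗ Δ)` as an algebra map `H ⊗ H → H ⊗ (H ⊗ H)`. -/
def idComul : H ⊗[k] H →ₐ[k] H ⊗[k] (H ⊗[k] H) :=
  Algebra.TensorProduct.map (AlgHom.id k H) (Bialgebra.comulAlgHom k H)

/-- `(Δ ⊗ Id)` as an algebra map `H ⊗ H → H ⊗ (H ⊗ H)` (after reassociation). -/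
def comulId : H ⊗[k] H →ₐ[k] H ⊗[k] (H ⊗[k] H) :=
  (Algebra.TensorProduct.assoc k k k H H H).toAlgHom.comp
    (Algebra.TensorProduct.map (Bialgebra.comulAlgHom k H) (AlgHom.id k H))

/-- the flip `a ⊗ b ↦ b ⊗ a` as an algebra map. -/
def swapT : H ⊗[k] H →ₐ[k] H ⊗[k] H := (Algebra.TensorProduct.comm k H H).toAlgHom

/-- A quasitriangular structure on the bialgebra `H`. -/
structure QT where
  R : H ⊗[k] H
  Rinv : H ⊗[k] H
  mul_inv : R * Rinv = 1
  inv_mul : Rinv * R = 1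
  quasi_cocomm : ∀ h : H, swapT k H (Coalgebra.comul (R := k) h) * R = R * Coalgebra.comul (R := k) h
  hex1 : idComul k H R = leg13 k H R * leg12 k H R
  hex2 : comulId k H R = leg13 k H R * leg23 k H R

/-- A pre-Cartier quasitriangular bialgebra structure on `H`. -/
structure PreCartier extends QT k H where
  χ : H ⊗[k] H
  chi_comm : ∀ h : H, χ * Coalgebra.comul (R := k) h = Coalgebra.comul (R := k) h * χ
  chi_hex1 : idComul k H χ = leg12 k H χ + leg12 k H Rinv * leg13 k H χ * leg12 k H R
  chi_hex2 : comulId k H χ = leg23 k H χ + leg23 k H Rinv * leg13 k H χ * leg23 k H R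

section TensorEval

variable {k} {M N P : Type*} [AddCommMonoid M] [Module k M] [AddCommMonoid N] [Module k N]
  [AddCommMonoid P] [Module k P]

def tensorEval (p : Module.Dual k M) (q : Module.Dual k N) : M ⊗[k] N →ₗ[k] k :=
  LinearMap.mul' k k ∘ₗ TensorProduct.map p q

@[simp]
lemma tensorEval_tmul (p : Module.Dual k M) (q : Module.Dual k N) (m : M) (n : N) :
    tensorEval p q (m ⊗ₜ n) = p m * q n := rfl

lemma tensorEval_assoc (p : Module.Dual k M) (q : Module.Dual k N) (r : Module.Dual k P)
    (x : (M ⊗[k] N) ⊗[k] P) :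
    tensorEval p (tensorEval q r) (TensorProduct.assoc k M N P x) =
      tensorEval (tensorEval p q) r x := by
  induction x using TensorProduct.induction_on with
  | zero => simp
  | tmul y c =>
    induction y using TensorProduct.induction_on with
    | zero => simp
    | tmul a b => simp [mul_assoc]
    | add y z hy hz => simp only [TensorProduct.add_tmul, map_add, hy, hz]
  | add x y hx hy => simp only [map_add, hx, hy]

end TensorEval

section DualBialgebra

open WithConv

variable {k H}

lemma tensorEval_leg12 (p q r : Module.Dual k H) (x : H ⊗[k] H) :
    tensorEval p (tensorEval q r) (leg12 k H x) = tensorEval p q x * r 1 := by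
  induction x using TensorProduct.induction_on with
  | zero => simp
  | tmul a b => simp [leg12, mul_assoc]
  | add x y hx hy => simp only [map_add, hx, hy, add_mul]

lemma tensorEval_leg23 (p q r : Module.Dual k H) (x : H ⊗[k] H) :
    tensorEval p (tensorEval q r) (leg23 k H x) = p 1 * tensorEval q r x := by
  induction x using TensorProduct.induction_on with
  | zero => simp
  | tmul a b => simp [leg23]
  | add x y hx hy => simp only [map_add, hx, hy, mul_add]

lemma tensorEval_convMul_right (p q r : Module.Dual k H) (x : H ⊗[k] H) :
    tensorEval p (toConv (A := H →ₗ[k] k) q * toConv r).ofConv x =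
      tensorEval p (tensorEval q r) (idComul k H x) := by
  induction x using TensorProduct.induction_on with
  | zero => simp
  | tmul a b => rfl
  | add x y hx hy => simp only [map_add, hx, hy]

lemma tensorEval_convMul_left (p q r : Module.Dual k H) (x : H ⊗[k] H) :
    tensorEval (toConv (A := H →ₗ[k] k) p * toConv q).ofConv r x =
      tensorEval p (tensorEval q r) (comulId k H x) := by
  induction x using TensorProduct.induction_on with
  | zero => simp
  | tmul a b =>
    rw [comulId, AlgHom.comp_apply, Algebra.TensorProduct.map_tmul]
    exact (tensorEval_assoc p q r (Coalgebra.comul a ⊗ₜ b)).symm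
  | add x y hx hy => simp only [map_add, hx, hy]

end DualBialgebra

theorem dual_preCartier (P : PreCartier k H) :
    let conv : Module.Dual k H → Module.Dual k H → Module.Dual k H := fun p q =>
      (LinearMap.mul' k k).comp ((TensorProduct.map p q).comp
        (Coalgebra.comul (R := k) (A := H)))
    let eval2 : Module.Dual k H → Module.Dual k H → (H ⊗[k] H →ₗ[k] k) := fun p q =>
      (LinearMap.mul' k k).comp (TensorProduct.map p q)
    let eval3 : Module.Dual k H → Module.Dual k H → Module.Dual k H →
        (H ⊗[k] (H ⊗[k] H) →ₗ[k] k) := fun p q r =>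
      (LinearMap.mul' k k).comp (TensorProduct.map p (eval2 q r))
    (∀ p q : Module.Dual k H, ∀ h : H,
      eval2 p q (P.χ * Coalgebra.comul (R := k) h)
        = eval2 p q (Coalgebra.comul (R := k) h * P.χ)) ∧
    (∀ p q r : Module.Dual k H,
      eval2 p (conv q r) P.χ
        = eval2 p q P.χ * r 1
          + eval3 p q r (leg12 k H P.Rinv * leg13 k H P.χ * leg12 k H P.R)) ∧
    (∀ p q r : Module.Dual k H,
      eval2 (conv p q) r P.χ
        = p 1 * eval2 q r P.χ
          + eval3 p q r (leg23 k H P.Rinv * leg13 k H P.χ * leg23 k H P.R)) ∧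
    (P.R * P.χ = swapT k H P.χ * P.R →
      ∀ p q : Module.Dual k H,
        eval2 p q (P.R * P.χ) = eval2 p q (swapT k H P.χ * P.R)) := by
  intro conv eval2 eval3
  refine ⟨fun p q h => by rw [P.chi_comm h], fun p q r => ?_, fun p q r => ?_,
    fun hCartier p q => by rw [hCartier]⟩
  · change tensorEval p (WithConv.toConv (A := H →ₗ[k] k) q * .toConv r).ofConv P.χ = _
    rw [tensorEval_convMul_right, P.chi_hex1, map_add, tensorEval_leg12]
    rfl
  · change tensorEval (WithConv.toConv (A := H →ₗ[k] k) p * .toConv q).ofConv r P.χ = _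
    rw [tensorEval_convMul_left, P.chi_hex2, map_add, tensorEval_leg23]
    rfl

end
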